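/- Let f, g, h, k be self-maps of a metric space (X,d) such that the pairs (f,h) and (g,k) are each subcompatible and subsequentially continuous with a common witnessing sequence. Let F : ℝ₊ → ℝ₊ be upper semicontinuous with 0 < F(t) < t for every t > 0, and suppose that for all x, y ∈ X: d(fx,gy) ≤ F( max{ d(hx,ky), d(hx,fx), d(gy,ky), (d(hx,gy)+d(ky,fx))/2 } ). Then f, g, h and k have a unique common fixed point. -/

import Mathlib

open Filter Topology NNReal

/-! At a point of coincidence the contractive condition of `F`-type degenerates to
`d ≤ F d`, which forces `d = 0` since `F t < t` for `t > 0`. Subcompatibility with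
subsequential continuity yields coincidence points `f t = h t` and `g u = k u`, approached
by the witnessing sequences; applying the condition along these sequences and passing to
the limit with the upper semicontinuity of `F` shows `t = f t = g u = u`. -/

/-- The pair `(f, g)` of self-maps of a metric space is subcompatible and
subsequentially continuous with a common witnessing sequence: there is a
sequence `x` and a point `t` with `lim f xₙ = lim g xₙ = t`,
`lim d(f (g xₙ), g (f xₙ)) = 0`, `lim f (g xₙ) = f t` and `lim g (f xₙ) = g t`. -/
def SubcompSubseqCont {X : Type*} [MetricSpace X] (f g : X → X) : Prop :=
  ∃ (x : ℕ → X) (t : X),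
    Tendsto (fun n => f (x n)) atTop (𝓝 t) ∧
    Tendsto (fun n => g (x n)) atTop (𝓝 t) ∧
    Tendsto (fun n => dist (f (g (x n))) (g (f (x n)))) atTop (𝓝 (0 : ℝ)) ∧
    Tendsto (fun n => f (g (x n))) atTop (𝓝 (f t)) ∧
    Tendsto (fun n => g (f (x n))) atTop (𝓝 (g t))

theorem UpperSemicontinuous.le_of_tendsto {α γ ι : Type*} [TopologicalSpace α] [LinearOrder γ]
    [TopologicalSpace γ] [ClosedIicTopology γ] {F : α → γ} (hF : UpperSemicontinuous F)
    {l : Filter ι} [l.NeBot] {a : ι → α} {b : ι → γ} {x : α} {y : γ}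
    (ha : Tendsto a l (𝓝 x)) (hb : Tendsto b l (𝓝 y)) (hle : ∀ᶠ n in l, b n ≤ F (a n)) :
    y ≤ F x :=
  hF.IsClosed_hypograph.mem_of_tendsto (ha.prodMk_nhds hb) hle

theorem SubcompSubseqCont.exists_coincidence {X : Type*} [MetricSpace X] {f g : X → X}
    (hfg : SubcompSubseqCont f g) :
    ∃ (x : ℕ → X) (t : X), Tendsto (fun n => f (x n)) atTop (𝓝 t) ∧
      Tendsto (fun n => g (x n)) atTop (𝓝 t) ∧ f t = g t := by
  obtain ⟨x, t, hfx, hgx, hcomm, hfgx, hgfx⟩ := hfg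
  exact ⟨x, t, hfx, hgx, dist_eq_zero.1 (tendsto_nhds_unique (hfgx.dist hgfx) hcomm)⟩

section FType

variable {X : Type*} [MetricSpace X]

/-- `ciricMax (h x) (k y) (f x) (g y)` is the argument of `F` in the contractive condition. -/
noncomputable def ciricMax (a b p q : X) : ℝ≥0 :=
  max (max (max (nndist a b) (nndist a p)) (nndist q b)) ((nndist a q + nndist b p) / 2)

@[simp]
theorem ciricMax_self (a b : X) : ciricMax a b a b = nndist a b := by
  simp [ciricMax, nndist_comm b a]

theorem Filter.Tendsto.ciricMax {ι : Type*} {l : Filter ι} {a b p q : ι → X} {α β γ δ : X}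
    (ha : Tendsto a l (𝓝 α)) (hb : Tendsto b l (𝓝 β)) (hp : Tendsto p l (𝓝 γ))
    (hq : Tendsto q l (𝓝 δ)) :
    Tendsto (fun n => ciricMax (a n) (b n) (p n) (q n)) l (𝓝 (ciricMax α β γ δ)) :=
  (((ha.nndist hb).max (ha.nndist hp)).max (hq.nndist hb)).max
    (((ha.nndist hq).add (hb.nndist hp)).div_const 2)

variable {F : ℝ≥0 → ℝ≥0}

theorem eq_zero_of_le_apply_self (hF : ∀ t, 0 < t → F t < t) {c : ℝ≥0} (hc : c ≤ F c) :
    c = 0 := by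
  by_contra hne
  exact (hF c (pos_iff_ne_zero.2 hne)).not_ge hc

theorem eq_of_nndist_le_apply_ciricMax (hF : ∀ t, 0 < t → F t < t) {p q : X}
    (hle : nndist p q ≤ F (ciricMax p q p q)) : p = q := by
  rw [ciricMax_self] at hle
  exact nndist_eq_zero.1 (eq_zero_of_le_apply_self hF hle)

theorem eq_of_tendsto_of_nndist_le_apply_ciricMax (hFusc : UpperSemicontinuous F)
    (hF : ∀ t, 0 < t → F t < t) {ι : Type*} {l : Filter ι} [l.NeBot] {a b p q : ι → X}
    {α β : X} (ha : Tendsto a l (𝓝 α)) (hb : Tendsto b l (𝓝 β))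
    (hp : Tendsto p l (𝓝 α)) (hq : Tendsto q l (𝓝 β))
    (hle : ∀ n, nndist (p n) (q n) ≤ F (ciricMax (a n) (b n) (p n) (q n))) : α = β :=
  eq_of_nndist_le_apply_ciricMax hF <|
    hFusc.le_of_tendsto (ha.ciricMax hb hp hq) (hp.nndist hq) (.of_forall hle)

end FType

theorem common_fixed_point_F_type {X : Type*} [MetricSpace X]
    (f g h k : X → X)
    (hfh : SubcompSubseqCont f h) (hgk : SubcompSubseqCont g k)
    (F : ℝ≥0 → ℝ≥0)
    (hFusc : UpperSemicontinuous F)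
    (hF : ∀ t : ℝ≥0, 0 < t → 0 < F t ∧ F t < t)
    (hineq : ∀ x y : X,
      nndist (f x) (g y) ≤ F (max (max (max (nndist (h x) (k y))
        (nndist (h x) (f x))) (nndist (g y) (k y)))
        ((nndist (h x) (g y) + nndist (k y) (f x)) / 2))) :
    ∃! t : X, f t = t ∧ g t = t ∧ h t = t ∧ k t = t := by
  replace hF : ∀ t, 0 < t → F t < t := fun t ht => (hF t ht).2
  replace hineq : ∀ x y, nndist (f x) (g y) ≤ F (ciricMax (h x) (k y) (f x) (g y)) := hineq
  obtain ⟨x, t, hfx, hhx, hft⟩ := hfh.exists_coincidence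
  obtain ⟨y, u, hgy, hky, hgu⟩ := hgk.exists_coincidence
  have hfu : f t = g u :=
    eq_of_nndist_le_apply_ciricMax hF (by simpa only [hft, hgu] using hineq t u)
  have htu : t = g u :=
    eq_of_tendsto_of_nndist_le_apply_ciricMax hFusc hF hhx (by rw [hgu]; exact tendsto_const_nhds)
      hfx tendsto_const_nhds fun n => hineq (x n) u
  have hut : f t = u :=
    eq_of_tendsto_of_nndist_le_apply_ciricMax hFusc hF (by rw [← hft]; exact tendsto_const_nhds)
      hky tendsto_const_nhds hgy fun n => hineq t (y n)
  obtain rfl : t = u := htu.trans (hfu.symm.trans hut)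
  have hftt : f t = t := hfu.trans htu.symm
  refine ⟨t, ⟨hftt, htu.symm, hft ▸ hftt, hgu ▸ htu.symm⟩, ?_⟩
  rintro s ⟨hfs, -, hhs, -⟩
  exact eq_of_nndist_le_apply_ciricMax hF <| by
    simpa only [hfs, hhs, ← hgu, ← htu] using hineq s t
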